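/- Fix 0 < m ≤ 1/2, m ≤ M, and T > 0. For every ε > 0 there exists n₀ such that for all n ≥ n₀ and all SIS parameters p = (W, z(0), γ, π) with m ≤ w_{ij} = w_{ji} ≤ M, m ≤ z_i(0) ≤ 1−m, 0 ≤ γ_i ≤ M, and π_i = 1/n for all i, there exists a symmetric matrix Ŵ with entries in [0, 2M] such that ‖W − Ŵ‖_□ ≥ m/16 > 0 and sup_{0 ≤ t ≤ T} ‖z(t) − ẑ(t)‖_{1,π} < ε, where z and ẑ are the trajectories of the SIS model with (W, z(0), γ, π) and (Ŵ, z(0), γ, π) respectively. -/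

import Mathlib

/-!
Perturb `W` by the rank-one matrix `-m • u uᵀ`, where `u ∈ [-1, 1]ⁿ` sums to zero on every class
of a partition of the vertices into classes whose trajectories stay `η`-close on `[0, T]`.
The trajectories are `[0, 1]`-valued and uniformly `M`-Lipschitz, so by Arzelà–Ascoli a number
`N` of classes depending only on `M`, `T`, `η` suffices. Splitting each class into two halves
leaves at most `N` vertices unused, so `∑ |uᵢ| ≥ n - N ≥ n / 2`; as `∑ uᵢ = 0`, the cut sum of
`m • u uᵀ` on `{u > 0} × {u < 0}` has absolute value `m (∑ |uᵢ|)² / (4 n²) ≥ m / 16`.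
The perturbation enters the dynamics only through `⟨u, Π z'⟩`, which differs from
`⟨u, Π z⟩ = O(η)` by at most `‖z - z'‖`, so Grönwall's inequality bounds `‖z - z'‖` by a
multiple of `η` on `[0, T]`.
-/

open Finset
open scoped NNReal BoundedContinuousFunction

section Combinatorics

variable {ι κ : Type*}

lemma Finset.exists_sum_eq_zero_card_le_sum_abs_add_one [DecidableEq ι] (s : Finset ι) :
    ∃ v : ι → ℝ, (∀ i, |v i| ≤ 1) ∧ ∑ i ∈ s, v i = 0 ∧ (#s : ℝ) ≤ ∑ i ∈ s, |v i| + 1 := by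
  obtain ⟨A, hAs, hA⟩ := exists_subset_card_eq (Nat.div_le_self #s 2)
  obtain ⟨B, hBs, hB⟩ := exists_subset_card_eq (s := s \ A) (n := #s / 2)
    (by rw [card_sdiff_of_subset hAs]; omega)
  have hAB : Disjoint A B := disjoint_of_subset_right hBs disjoint_sdiff
  have hBs' : B ⊆ s := hBs.trans sdiff_subset
  set v : ι → ℝ := (A : Set ι).indicator 1 - (B : Set ι).indicator 1
  have habs : ∀ i, |v i| = (A : Set ι).indicator 1 i + (B : Set ι).indicator 1 i := fun i => by
    by_cases hi : i ∈ A
    · simp [v, hi, disjoint_left.1 hAB hi]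
    · by_cases hi' : i ∈ B <;> simp [v, hi, hi']
  refine ⟨v, fun i => ?_, ?_, ?_⟩
  · by_cases hi : i ∈ A <;> by_cases hi' : i ∈ B <;> simp [v, hi, hi']
  · simp [v, sum_sub_distrib, sum_indicator_subset _ hAs, sum_indicator_subset _ hBs', hA, hB]
  · simp only [habs, sum_add_distrib, sum_indicator_subset _ hAs, sum_indicator_subset _ hBs',
      Pi.one_apply, sum_const, hA, hB, nsmul_one]
    have := Nat.div_add_mod #s 2
    have := Nat.mod_lt #s two_pos
    norm_cast
    omega

lemma exists_fiber_sum_eq_zero_card_le_sum_abs_add_card [Fintype ι] [DecidableEq κ] [Fintype κ]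
    (key : ι → κ) :
    ∃ u : ι → ℝ, (∀ i, |u i| ≤ 1) ∧ (∀ c, ∑ i with key i = c, u i = 0) ∧
      (Fintype.card ι : ℝ) ≤ ∑ i, |u i| + Fintype.card κ := by
  classical
  choose v hv1 hv0 hvcard using fun c =>
    exists_sum_eq_zero_card_le_sum_abs_add_one (univ.filter (key · = c))
  have hfiber : ∀ (F : κ → ι → ℝ) c, ∑ i with key i = c, F (key i) i = ∑ i with key i = c, F c i :=
    fun F c => sum_congr rfl fun i hi => by rw [(mem_filter.1 hi).2]
  refine ⟨fun i => v (key i) i, fun i => hv1 _ _, fun c => ?_, ?_⟩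
  · rw [hfiber v c, hv0]
  · calc (Fintype.card ι : ℝ) = ∑ c, (#{i | key i = c} : ℝ) := by
          rw [← Nat.cast_sum, ← card_eq_sum_card_fiberwise (fun i _ => mem_univ (key i))]; rfl
      _ ≤ ∑ c, (∑ i with key i = c, |v c i| + 1) := sum_le_sum fun c _ => hvcard c
      _ = ∑ i, |v (key i) i| + Fintype.card κ := by
          rw [sum_add_distrib, ← sum_fiberwise univ key fun i => |v (key i) i|]
          simp [hfiber (fun c i => |v c i|)]

lemma Finset.abs_sum_mul_le_of_sum_eq_zero (s : Finset ι) {u v : ι → ℝ} {ρ : ℝ}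
    (hu : ∑ i ∈ s, u i = 0) (hv : ∀ i ∈ s, ∀ j ∈ s, |v i - v j| ≤ ρ) :
    |∑ i ∈ s, u i * v i| ≤ ρ * ∑ i ∈ s, |u i| := by
  rcases s.eq_empty_or_nonempty with rfl | ⟨j, hj⟩
  · simp
  have hshift : ∑ i ∈ s, u i * v i = ∑ i ∈ s, u i * (v i - v j) := by
    simp only [mul_sub, sum_sub_distrib, ← sum_mul, hu, zero_mul, sub_zero]
  rw [hshift, mul_sum]
  refine (abs_sum_le_sum_abs _ _).trans (sum_le_sum fun i hi => ?_)
  rw [abs_mul, mul_comm ρ]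
  exact mul_le_mul_of_nonneg_left (hv i hi j hj) (abs_nonneg _)

lemma abs_sum_mul_le_of_fiber_sum_eq_zero [Fintype ι] [DecidableEq κ] [Fintype κ] (key : ι → κ)
    {u v : ι → ℝ} {ρ : ℝ} (hu : ∀ c, ∑ i with key i = c, u i = 0)
    (hv : ∀ i j, key i = key j → |v i - v j| ≤ ρ) :
    |∑ i, u i * v i| ≤ ρ * ∑ i, |u i| := by
  rw [← sum_fiberwise univ key, ← sum_fiberwise univ key, mul_sum]
  refine (abs_sum_le_sum_abs _ _).trans (sum_le_sum fun c _ => ?_)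
  refine abs_sum_mul_le_of_sum_eq_zero _ (hu c) fun i hi j hj => hv i j ?_
  rw [(mem_filter.1 hi).2, (mem_filter.1 hj).2]

lemma sum_filter_pos_mul_sum_filter_neg [Fintype ι] {u : ι → ℝ} (hu : ∑ i, u i = 0) :
    (∑ i with 0 < u i, u i) * (∑ i with u i < 0, u i) = -(∑ i, |u i|) ^ 2 / 4 := by
  have hsum : (∑ i with 0 < u i, u i) + ∑ i with u i < 0, u i = ∑ i, u i := by
    rw [sum_filter, sum_filter, ← sum_add_distrib]
    refine sum_congr rfl fun i _ => ?_
    split_ifs <;> linarith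
  have habs : (∑ i with 0 < u i, u i) - ∑ i with u i < 0, u i = ∑ i, |u i| := by
    rw [sum_filter, sum_filter, ← sum_sub_distrib]
    refine sum_congr rfl fun i _ => ?_
    split_ifs <;> cases abs_cases (u i) <;> linarith
  rw [hu] at hsum
  rw [← habs]
  linear_combination ((∑ i with 0 < u i, u i) + ∑ i with u i < 0, u i) / 4 * hsum

lemma sub_smul_vecMulVec_apply_mem_Icc {W : Matrix ι ι ℝ} {u : ι → ℝ} (hu : ∀ i, |u i| ≤ 1)
    {a b m : ℝ} (hm : 0 ≤ m) {i j : ι} (hW : W i j ∈ Set.Icc a b) :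
    (W - m • Matrix.vecMulVec u u) i j ∈ Set.Icc (a - m) (b + m) := by
  have huu : |u i * u j| ≤ 1 := by
    rw [abs_mul]; exact mul_le_one₀ (hu i) (abs_nonneg _) (hu j)
  have hmuu : |m * (u i * u j)| ≤ m := by
    rw [abs_mul, abs_of_nonneg hm]; exact mul_le_of_le_one_right hm huu
  obtain ⟨h₁, h₂⟩ := abs_le.1 hmuu
  simp only [Matrix.sub_apply, Matrix.smul_apply, Matrix.vecMulVec_apply, smul_eq_mul,
    Set.mem_Icc]
  constructor <;> linarith [hW.1, hW.2]

lemma exists_balanced_vector_of_key {n N : ℕ} (hn : 2 * N + 1 ≤ n) (key : Fin n → Fin N) :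
    ∃ u : Fin n → ℝ, (∀ i, |u i| ≤ 1) ∧ ∑ i, u i = 0 ∧ 1 ≤ 2 * (1 / (n : ℝ)) * ∑ i, |u i| ∧
      ∀ (v : Fin n → ℝ) (ρ : ℝ), (∀ i j, key i = key j → |v i - v j| ≤ ρ) →
        |∑ j, u j * (1 / (n : ℝ)) * v j| ≤ ρ := by
  obtain ⟨u, hu1, hufib, hucard⟩ := exists_fiber_sum_eq_zero_card_le_sum_abs_add_card key
  have hn0 : (0 : ℝ) < n := by exact_mod_cast (show 0 < n by omega)
  have hnN : (2 * N + 1 : ℝ) ≤ n := by exact_mod_cast hn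
  rw [Fintype.card_fin, Fintype.card_fin] at hucard
  have hsumu : ∑ i, |u i| ≤ n := by simpa using sum_le_sum fun i (_ : i ∈ univ) => hu1 i
  refine ⟨u, hu1, by rw [← sum_fiberwise univ key]; simp [hufib], ?_, fun v ρ hv => ?_⟩
  · rw [show 2 * (1 / (n : ℝ)) * ∑ i, |u i| = 2 * (∑ i, |u i|) / n by ring, one_le_div hn0]
    linarith
  have hρ : 0 ≤ ρ := (abs_nonneg _).trans (hv ⟨0, by omega⟩ _ rfl)
  rw [show ∑ j, u j * (1 / (n : ℝ)) * v j = (∑ j, u j * v j) / n by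
    rw [sum_div]; exact sum_congr rfl fun _ _ => by ring, abs_div, abs_of_pos hn0,
    div_le_iff₀ hn0]
  exact (abs_sum_mul_le_of_fiber_sum_eq_zero key hufib hv).trans
    (mul_le_mul_of_nonneg_left hsumu hρ)

end Combinatorics

lemma exists_fin_key_abs_sub_lt_of_lipschitzOnWith (L : ℝ≥0) (T : ℝ) {ρ : ℝ} (hρ : 0 < ρ) :
    ∃ N : ℕ, ∀ {ι : Type} (f : ι → ℝ → ℝ),
      (∀ i, Set.MapsTo (f i) (Set.Icc 0 T) (Set.Icc 0 1)) →
      (∀ i, LipschitzOnWith L (f i) (Set.Icc 0 T)) →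
      ∃ key : ι → Fin N, ∀ i j, key i = key j → ∀ s ∈ Set.Icc 0 T, |f i s - f j s| < ρ := by
  let A : Set (Set.Icc (0 : ℝ) T →ᵇ Set.Icc (0 : ℝ) 1) := {g | LipschitzWith L g}
  have hclosed : IsClosed A :=
    (isClosed_setOfPred_lipschitzWith (α := Set.Icc (0 : ℝ) T) (β := Set.Icc (0 : ℝ) 1)
      L).preimage BoundedContinuousFunction.continuous_coe
  have hA : IsCompact A := BoundedContinuousFunction.arzela_ascoli₁ A hclosed
    (LipschitzWith.uniformEquicontinuous _ L fun g => g.2).equicontinuous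
  obtain ⟨t, -, ht, hcover⟩ :=
    Metric.finite_approx_of_totallyBounded hA.totallyBounded (ρ / 2) (half_pos hρ)
  have := ht.fintype
  refine ⟨Fintype.card t, fun {ι} f hmaps hlip => ?_⟩
  let g : ι → (Set.Icc (0 : ℝ) T →ᵇ Set.Icc (0 : ℝ) 1) := fun i =>
    .mkOfCompact ⟨(hmaps i).restrict, (hlip i).to_restrict.continuous.subtype_mk _⟩
  have hgA : ∀ i, g i ∈ A := fun i => (hlip i).to_restrict
  choose c hct hc using fun i => Set.mem_iUnion₂.1 (hcover (hgA i))
  refine ⟨fun i => Fintype.equivFin t ⟨c i, hct i⟩, fun i j hij s hs => ?_⟩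
  have hcij : c i = c j := by simpa using hij
  calc |f i s - f j s| = dist (g i ⟨s, hs⟩) (g j ⟨s, hs⟩) := rfl
    _ ≤ dist (g i) (g j) := BoundedContinuousFunction.dist_coe_le_dist _
    _ ≤ dist (g i) (c i) + dist (g j) (c j) := by rw [hcij]; exact dist_triangle_right _ _ _
    _ < ρ / 2 + ρ / 2 := add_lt_add (hc i) (hc j)
    _ = ρ := add_halves ρ

section SIS

variable {ι : Type*} [Fintype ι]

def sisField (W : Matrix ι ι ℝ) (π γ z : ι → ℝ) : ι → ℝ :=
  fun i => (1 - z i) * ∑ j, W i j * π j * z j - γ i * z i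

def IsSISSolution (W : Matrix ι ι ℝ) (π γ : ι → ℝ) (z : ℝ → ι → ℝ) : Prop :=
  ∀ i, ∀ t ∈ Set.Ici (0 : ℝ),
    HasDerivWithinAt (fun s => z s i) (sisField W π γ (z t) i) (Set.Ici 0) t

variable {W : Matrix ι ι ℝ} {π γ : ι → ℝ} {M : ℝ}

lemma abs_sum_mul_mul_le_of_abs_le (hπ : ∀ i, 0 ≤ π i) (hπ1 : ∑ i, π i = 1) {w x : ι → ℝ}
    {C : ℝ} (hC : ∀ j, |w j * x j| ≤ C) : |∑ j, w j * π j * x j| ≤ C :=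
  calc |∑ j, w j * π j * x j| ≤ ∑ j, π j * C := by
        refine (abs_sum_le_sum_abs _ _).trans (sum_le_sum fun j _ => ?_)
        rw [mul_right_comm, abs_mul, abs_of_nonneg (hπ j), mul_comm]
        exact mul_le_mul_of_nonneg_left (hC j) (hπ j)
    _ = C := by rw [← sum_mul, hπ1, one_mul]

lemma abs_sum_mul_mul_le (hπ : ∀ i, 0 ≤ π i) (hπ1 : ∑ i, π i = 1) {w : ι → ℝ}
    (hw : ∀ j, |w j| ≤ M) (x : ι → ℝ) : |∑ j, w j * π j * x j| ≤ M * ‖x‖ :=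
  abs_sum_mul_mul_le_of_abs_le hπ hπ1 fun j => by
    rw [abs_mul]
    exact mul_le_mul (hw j) (norm_le_pi_norm x j) (abs_nonneg _) ((abs_nonneg _).trans (hw j))

lemma sum_abs_mul_le_norm (hπ : ∀ i, 0 ≤ π i) (hπ1 : ∑ i, π i = 1) (x : ι → ℝ) :
    ∑ i, |x i| * π i ≤ ‖x‖ :=
  calc ∑ i, |x i| * π i ≤ ∑ i, ‖x‖ * π i :=
        sum_le_sum fun i _ => mul_le_mul_of_nonneg_right (norm_le_pi_norm x i) (hπ i)
    _ = ‖x‖ := by rw [← mul_sum, hπ1, mul_one]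

lemma sum_mul_mul_mem_Icc (hπ : ∀ i, 0 ≤ π i) (hπ1 : ∑ i, π i = 1)
    (hW : ∀ i j, W i j ∈ Set.Icc 0 M) {z : ι → ℝ} (hz : ∀ i, z i ∈ Set.Icc 0 1) (i : ι) :
    ∑ j, W i j * π j * z j ∈ Set.Icc 0 M :=
  ⟨sum_nonneg fun j _ => mul_nonneg (mul_nonneg (hW i j).1 (hπ j)) (hz j).1,
    (le_abs_self _).trans <| abs_sum_mul_mul_le_of_abs_le hπ hπ1 fun j => by
      rw [abs_mul, abs_of_nonneg (hW i j).1, abs_of_nonneg (hz j).1]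
      exact (mul_le_of_le_one_right (hW i j).1 (hz j).2).trans (hW i j).2⟩

lemma abs_sisField_le (hπ : ∀ i, 0 ≤ π i) (hπ1 : ∑ i, π i = 1)
    (hW : ∀ i j, W i j ∈ Set.Icc 0 M) (hγ : ∀ i, γ i ∈ Set.Icc 0 M) {z : ι → ℝ}
    (hz : ∀ i, z i ∈ Set.Icc 0 1) (i : ι) : |sisField W π γ z i| ≤ M := by
  obtain ⟨hinf, hsup⟩ := sum_mul_mul_mem_Icc hπ hπ1 hW hz i
  obtain ⟨hzi₀, hzi₁⟩ := hz i
  obtain ⟨hγ₀, hγ₁⟩ := hγ i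
  rw [sisField, abs_le]
  constructor <;> nlinarith

lemma norm_sisField_sub_le (hπ : ∀ i, 0 ≤ π i) (hπ1 : ∑ i, π i = 1)
    (hW : ∀ i j, W i j ∈ Set.Icc 0 M) (hγ : ∀ i, γ i ∈ Set.Icc 0 M) {z z' : ι → ℝ}
    (hz : ∀ i, z i ∈ Set.Icc 0 1) (hz' : ∀ i, z' i ∈ Set.Icc 0 1) :
    ‖sisField W π γ z - sisField W π γ z'‖ ≤ 3 * M * ‖z - z'‖ := by
  obtain ⟨i₀, -⟩ := univ.nonempty_of_sum_ne_zero (hπ1 ▸ one_ne_zero)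
  have hM : 0 ≤ M := (hγ i₀).1.trans (hγ i₀).2
  refine (pi_norm_le_iff_of_nonneg (by positivity)).2 fun i => ?_
  have hW' : ∀ j, |W i j| ≤ M := fun j => abs_le.2 ⟨by linarith [(hW i j).1], (hW i j).2⟩
  have hdiff : ∑ j, W i j * π j * z j - ∑ j, W i j * π j * z' j =
      ∑ j, W i j * π j * (z - z') j := by
    rw [← sum_sub_distrib]; exact sum_congr rfl fun j _ => by simp only [Pi.sub_apply]; ring
  have hsplit : sisField W π γ z i - sisField W π γ z' i =
      (1 - z i) * ∑ j, W i j * π j * (z - z') j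
        - (z - z') i * ∑ j, W i j * π j * z' j - γ i * (z - z') i := by
    rw [← hdiff]; simp only [sisField, Pi.sub_apply]; ring
  have hA := abs_sum_mul_mul_le hπ hπ1 hW' (z - z')
  have hB := abs_le.2 ⟨by linarith [(sum_mul_mul_mem_Icc hπ hπ1 hW hz' i).1],
    (sum_mul_mul_mem_Icc hπ hπ1 hW hz' i).2⟩
  have hzi := norm_le_pi_norm (z - z') i
  rw [Real.norm_eq_abs] at hzi ⊢
  have h1 : |(1 - z i) * ∑ j, W i j * π j * (z - z') j| ≤ M * ‖z - z'‖ := by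
    rw [abs_mul, ← one_mul (M * _)]
    exact mul_le_mul (abs_sub_le_of_nonneg_of_le zero_le_one le_rfl (hz i).1 (hz i).2) hA
      (abs_nonneg _) zero_le_one
  have h2 : |(z - z') i * ∑ j, W i j * π j * z' j| ≤ ‖z - z'‖ * M := by
    rw [abs_mul]; exact mul_le_mul hzi hB (abs_nonneg _) (norm_nonneg _)
  have h3 : |γ i * (z - z') i| ≤ M * ‖z - z'‖ := by
    rw [abs_mul, abs_of_nonneg (hγ i).1]; exact mul_le_mul (hγ i).2 hzi (abs_nonneg _) hM
  calc |(sisField W π γ z - sisField W π γ z') i|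
      ≤ |(1 - z i) * ∑ j, W i j * π j * (z - z') j| + |(z - z') i * ∑ j, W i j * π j * z' j|
        + |γ i * (z - z') i| := by
        rw [Pi.sub_apply, hsplit]
        exact (abs_sub _ _).trans (add_le_add_left (abs_sub _ _) _)
    _ ≤ M * ‖z - z'‖ + ‖z - z'‖ * M + M * ‖z - z'‖ := add_le_add (add_le_add h1 h2) h3
    _ = 3 * M * ‖z - z'‖ := by ring

lemma sisField_sub_rankOne_apply (W : Matrix ι ι ℝ) (π γ x u : ι → ℝ) (m : ℝ) (i : ι) :
    sisField W π γ x i - sisField (W - m • Matrix.vecMulVec u u) π γ x i =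
      (1 - x i) * (m * u i * ∑ j, u j * π j * x j) := by
  have hsum : ∑ j, (W - m • Matrix.vecMulVec u u) i j * π j * x j =
      ∑ j, W i j * π j * x j - m * u i * ∑ j, u j * π j * x j := by
    rw [mul_sum, ← sum_sub_distrib]
    refine sum_congr rfl fun j _ => ?_
    simp only [Matrix.sub_apply, Matrix.smul_apply, Matrix.vecMulVec_apply, smul_eq_mul]
    ring
  simp only [sisField, hsum]
  ring

lemma norm_sisField_sub_rankOne_le {x u : ι → ℝ} {m : ℝ} (hm : 0 ≤ m)
    (hx : ∀ i, x i ∈ Set.Icc 0 1) (hu : ∀ i, |u i| ≤ 1) :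
    ‖sisField W π γ x - sisField (W - m • Matrix.vecMulVec u u) π γ x‖ ≤
      m * |∑ j, u j * π j * x j| := by
  refine (pi_norm_le_iff_of_nonneg (by positivity)).2 fun i => ?_
  rw [Pi.sub_apply, sisField_sub_rankOne_apply, Real.norm_eq_abs, abs_mul, abs_mul, abs_mul,
    abs_of_nonneg hm]
  have h1 : |1 - x i| ≤ 1 := abs_sub_le_of_nonneg_of_le zero_le_one le_rfl (hx i).1 (hx i).2
  have h2 : m * |u i| ≤ m := mul_le_of_le_one_right hm (hu i)
  calc |1 - x i| * (m * |u i| * |∑ j, u j * π j * x j|)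
      ≤ 1 * (m * |∑ j, u j * π j * x j|) := by gcongr
    _ = m * |∑ j, u j * π j * x j| := one_mul _

lemma IsSISSolution.lipschitzOnWith {z : ℝ → ι → ℝ} (hsol : IsSISSolution W π γ z)
    (hπ : ∀ i, 0 ≤ π i) (hπ1 : ∑ i, π i = 1)
    (hW : ∀ i j, W i j ∈ Set.Icc 0 M) (hγ : ∀ i, γ i ∈ Set.Icc 0 M)
    (hbox : ∀ t ∈ Set.Ici (0 : ℝ), ∀ i, z t i ∈ Set.Icc 0 1) (i : ι) :
    LipschitzOnWith M.toNNReal (fun s => z s i) (Set.Ici 0) :=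
  (convex_Ici 0).lipschitzOnWith_of_nnnorm_hasDerivWithin_le (hsol i) fun t ht => by
    rw [← NNReal.coe_le_coe, coe_nnnorm]
    exact (abs_sisField_le hπ hπ1 hW hγ (hbox t ht) i).trans (Real.le_coe_toNNReal M)

lemma IsSISSolution.hasDerivWithinAt {z : ℝ → ι → ℝ} (hsol : IsSISSolution W π γ z) {t : ℝ}
    (ht : 0 ≤ t) : HasDerivWithinAt z (sisField W π γ (z t)) (Set.Ici 0) t :=
  hasDerivWithinAt_pi.2 fun i => hsol i t ht

theorem IsSISSolution.norm_sub_le_gronwallBound_of_rankOne {z z' : ℝ → ι → ℝ} {u : ι → ℝ}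
    {m η T : ℝ} (hπ : ∀ i, 0 ≤ π i) (hπ1 : ∑ i, π i = 1)
    (hW : ∀ i j, W i j ∈ Set.Icc 0 M) (hγ : ∀ i, γ i ∈ Set.Icc 0 M) (hm : 0 ≤ m)
    (hu : ∀ i, |u i| ≤ 1)
    (hsol : IsSISSolution W π γ z) (hbox : ∀ t ∈ Set.Ici (0 : ℝ), ∀ i, z t i ∈ Set.Icc 0 1)
    (hsol' : IsSISSolution (W - m • Matrix.vecMulVec u u) π γ z')
    (hbox' : ∀ t ∈ Set.Ici (0 : ℝ), ∀ i, z' t i ∈ Set.Icc 0 1) (h0 : z' 0 = z 0)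
    (horth : ∀ s ∈ Set.Icc 0 T, |∑ j, u j * π j * z s j| ≤ η) :
    ∀ t ∈ Set.Icc 0 T, ‖z t - z' t‖ ≤ gronwallBound 0 (3 * M + m) (m * η) t := by
  have hderiv : ∀ t ∈ Set.Ici (0 : ℝ), HasDerivWithinAt (fun s => z s - z' s)
      (sisField W π γ (z t) - sisField (W - m • Matrix.vecMulVec u u) π γ (z' t)) (Set.Ici 0) t :=
    fun t ht => (hsol.hasDerivWithinAt ht).sub (hsol'.hasDerivWithinAt ht)
  have hbound : ∀ s ∈ Set.Ico 0 T,
      ‖sisField W π γ (z s) - sisField (W - m • Matrix.vecMulVec u u) π γ (z' s)‖ ≤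
        (3 * M + m) * ‖z s - z' s‖ + m * η := by
    intro s hs
    have hs0 : s ∈ Set.Ici (0 : ℝ) := hs.1
    have hcorr : |∑ j, u j * π j * z' s j| ≤ η + ‖z s - z' s‖ := by
      have hsplit : ∑ j, u j * π j * z' s j =
          ∑ j, u j * π j * z s j - ∑ j, u j * π j * (z s - z' s) j := by
        rw [← sum_sub_distrib]
        exact sum_congr rfl fun j _ => by simp only [Pi.sub_apply]; ring
      rw [hsplit]
      refine (abs_sub _ _).trans (add_le_add (horth s (Set.Ico_subset_Icc_self hs)) ?_)
      simpa using abs_sum_mul_mul_le hπ hπ1 hu (z s - z' s)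
    calc _ ≤ ‖sisField W π γ (z s) - sisField W π γ (z' s)‖ +
          ‖sisField W π γ (z' s) - sisField (W - m • Matrix.vecMulVec u u) π γ (z' s)‖ :=
          norm_sub_le_norm_sub_add_norm_sub _ _ _
      _ ≤ 3 * M * ‖z s - z' s‖ + m * (η + ‖z s - z' s‖) :=
          add_le_add (norm_sisField_sub_le hπ hπ1 hW hγ (hbox s hs0) (hbox' s hs0))
            ((norm_sisField_sub_rankOne_le hm (hbox' s hs0) hu).trans
              (mul_le_mul_of_nonneg_left hcorr hm))
      _ = (3 * M + m) * ‖z s - z' s‖ + m * η := by ring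
  intro t ht
  simpa using norm_le_gronwallBound_of_norm_deriv_right_le (f := fun s => z s - z' s)
    (fun s hs => (hderiv s hs.1).continuousWithinAt.mono Set.Icc_subset_Ici_self)
    (fun s hs => (hderiv s hs.1).mono (Set.Ici_subset_Ici.2 hs.1)) (by simp [h0]) hbound t ht

lemma le_abs_sum_sum_sub_rankOne (W : Matrix ι ι ℝ) {u : ι → ℝ} (hu : ∑ i, u i = 0) {c m : ℝ}
    (hc : 1 ≤ 2 * c * ∑ i, |u i|) (hm : 0 ≤ m) :
    m / 16 ≤ |∑ i with 0 < u i, ∑ j with u j < 0,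
      (W i j - (W - m • Matrix.vecMulVec u u) i j) * c * c| := by
  have hterm : ∀ i j, (W i j - (W - m • Matrix.vecMulVec u u) i j) * c * c =
      m * c ^ 2 * (u i * u j) := fun i j => by
    simp only [Matrix.sub_apply, Matrix.smul_apply, Matrix.vecMulVec_apply, smul_eq_mul]
    ring
  simp only [hterm, ← mul_sum, ← sum_mul, sum_filter_pos_mul_sum_filter_neg hu]
  rw [abs_mul, abs_of_nonneg (by positivity), abs_div, abs_neg, abs_of_nonneg (by positivity)]
  have : 1 ≤ (2 * c * ∑ i, |u i|) ^ 2 := one_le_pow₀ hc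
  nlinarith

end SIS

theorem stmt_11_general (m M T : ℝ) (hm : 0 < m) (hmM : m ≤ M) :
    ∀ ε > (0 : ℝ), ∃ n₀ : ℕ, ∀ n : ℕ, n₀ ≤ n →
      ∀ (W : Matrix (Fin n) (Fin n) ℝ) (pv γ : Fin n → ℝ) (z : ℝ → Fin n → ℝ),
        W.IsSymm → (∀ i j, W i j ∈ Set.Icc m M) →
        (∀ i, pv i = 1 / (n : ℝ)) →
        (∀ i, γ i ∈ Set.Icc (0 : ℝ) M) →
        (∀ i, z 0 i ∈ Set.Icc m (1 - m)) →
        (∀ i, ∀ t ∈ Set.Ici (0 : ℝ), HasDerivWithinAt (fun s => z s i)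
          ((1 - z t i) * (∑ j, W i j * pv j * z t j) - γ i * z t i) (Set.Ici 0) t) →
        (∀ t ∈ Set.Ici (0 : ℝ), ∀ i, z t i ∈ Set.Icc (0 : ℝ) 1) →
        ∃ W' : Matrix (Fin n) (Fin n) ℝ, W'.IsSymm ∧
          (∀ i j, W' i j ∈ Set.Icc (0 : ℝ) (2 * M)) ∧
          (∃ S S' : Finset (Fin n),
            m / 16 ≤ |∑ i ∈ S, ∑ j ∈ S', (W i j - W' i j) * pv i * pv j|) ∧
          0 < m / 16 ∧
          ∀ z' : ℝ → Fin n → ℝ,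
            z' 0 = z 0 →
            (∀ i, ∀ t ∈ Set.Ici (0 : ℝ), HasDerivWithinAt (fun s => z' s i)
              ((1 - z' t i) * (∑ j, W' i j * pv j * z' t j) - γ i * z' t i)
              (Set.Ici 0) t) →
            (∀ t ∈ Set.Ici (0 : ℝ), ∀ i, z' t i ∈ Set.Icc (0 : ℝ) 1) →
            ∀ t ∈ Set.Icc (0 : ℝ) T, ∑ i, |z t i - z' t i| * pv i < ε := by
  intro ε hε
  have hK : 0 < 3 * M + m := by linarith
  obtain ⟨η, hη, hηε⟩ :=
    exists_pos_mul_lt hε (m / (3 * M + m) * (Real.exp ((3 * M + m) * T) - 1))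
  obtain ⟨N, hN⟩ := exists_fin_key_abs_sub_lt_of_lipschitzOnWith M.toNNReal T hη
  refine ⟨2 * N + 1, fun n hn W pv γ z hsym hW hpv hγ _ hsol hbox => ?_⟩
  obtain rfl : pv = fun _ => 1 / (n : ℝ) := funext hpv
  have hπ : ∀ _ : Fin n, (0 : ℝ) ≤ 1 / n := fun _ => by positivity
  have hπ1 : ∑ _ : Fin n, 1 / (n : ℝ) = 1 := by simp [show n ≠ 0 by omega]
  have hW0 : ∀ i j, W i j ∈ Set.Icc 0 M := fun i j => ⟨hm.le.trans (hW i j).1, (hW i j).2⟩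
  replace hsol : IsSISSolution W (fun _ => 1 / (n : ℝ)) γ z := hsol
  obtain ⟨key, hkey⟩ := hN (fun i s => z s i) (fun i s hs => hbox s hs.1 i)
    fun i => (hsol.lipschitzOnWith hπ hπ1 hW0 hγ hbox i).mono Set.Icc_subset_Ici_self
  obtain ⟨u, hu1, hu0, hcut, hbalanced⟩ := exists_balanced_vector_of_key hn key
  refine ⟨W - m • Matrix.vecMulVec u u,
    hsym.sub (Matrix.IsSymm.smul (Matrix.transpose_vecMulVec u u) m),
    fun i j => Set.Icc_subset_Icc (by linarith) (by linarith)
      (sub_smul_vecMulVec_apply_mem_Icc hu1 hm.le (hW i j)),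
    ⟨_, _, le_abs_sum_sum_sub_rankOne W hu0 hcut hm.le⟩, by positivity,
    fun z' h0 hsol' hbox' t ht => ?_⟩
  calc ∑ i, |z t i - z' t i| * (1 / (n : ℝ)) ≤ ‖z t - z' t‖ := sum_abs_mul_le_norm hπ hπ1 _
    _ ≤ gronwallBound 0 (3 * M + m) (m * η) t :=
        hsol.norm_sub_le_gronwallBound_of_rankOne hπ hπ1 hW0 hγ hm.le hu1 hbox hsol' hbox' h0
          (fun s hs => hbalanced _ _ fun i j hij => (hkey i j hij s hs).le) t ht
    _ ≤ gronwallBound 0 (3 * M + m) (m * η) T :=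
        gronwallBound_mono le_rfl (by positivity) hK.le ht.2
    _ = m / (3 * M + m) * (Real.exp ((3 * M + m) * T) - 1) * η := by
        rw [gronwallBound_of_K_ne_0 hK.ne']; ring
    _ < ε := hηε

/-- Reconstruction is ill-conditioned for large networks: for every `ε > 0` there is
`n₀` such that for all `n ≥ n₀` and all SIS parameters with `m ≤ w_{ij} ≤ M`,
`m ≤ z_i(0) ≤ 1−m`, `0 ≤ γ_i ≤ M` and `π_i = 1/n`, there is a symmetric `Ŵ` with
entries in `[0, 2M]` whose cut distance from `W` is at least `m/16 > 0`
(witnessed by sets `S, S'`), while the trajectories satisfy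
`sup_{0 ≤ t ≤ T} ‖z(t) − ẑ(t)‖_{1,π} < ε`. -/
theorem stmt_11 (m M T : ℝ) (hm : 0 < m) (hm2 : m ≤ 1 / 2) (hmM : m ≤ M)
    (hT : 0 < T) :
    ∀ ε > (0 : ℝ), ∃ n₀ : ℕ, ∀ n : ℕ, n₀ ≤ n →
      ∀ (W : Matrix (Fin n) (Fin n) ℝ) (pv γ : Fin n → ℝ) (z : ℝ → Fin n → ℝ),
        W.IsSymm → (∀ i j, W i j ∈ Set.Icc m M) →
        (∀ i, pv i = 1 / (n : ℝ)) →
        (∀ i, γ i ∈ Set.Icc (0 : ℝ) M) →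
        (∀ i, z 0 i ∈ Set.Icc m (1 - m)) →
        (∀ i, ∀ t ∈ Set.Ici (0 : ℝ), HasDerivWithinAt (fun s => z s i)
          ((1 - z t i) * (∑ j, W i j * pv j * z t j) - γ i * z t i) (Set.Ici 0) t) →
        (∀ t ∈ Set.Ici (0 : ℝ), ∀ i, z t i ∈ Set.Icc (0 : ℝ) 1) →
        ∃ W' : Matrix (Fin n) (Fin n) ℝ, W'.IsSymm ∧
          (∀ i j, W' i j ∈ Set.Icc (0 : ℝ) (2 * M)) ∧
          (∃ S S' : Finset (Fin n),
            m / 16 ≤ |∑ i ∈ S, ∑ j ∈ S', (W i j - W' i j) * pv i * pv j|) ∧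
          0 < m / 16 ∧
          ∀ z' : ℝ → Fin n → ℝ,
            z' 0 = z 0 →
            (∀ i, ∀ t ∈ Set.Ici (0 : ℝ), HasDerivWithinAt (fun s => z' s i)
              ((1 - z' t i) * (∑ j, W' i j * pv j * z' t j) - γ i * z' t i)
              (Set.Ici 0) t) →
            (∀ t ∈ Set.Ici (0 : ℝ), ∀ i, z' t i ∈ Set.Icc (0 : ℝ) 1) →
            ∀ t ∈ Set.Icc (0 : ℝ) T, ∑ i, |z t i - z' t i| * pv i < ε :=
  stmt_11_general m M T hm hmM
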